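/- With notation as in the diagonal-intersection setting: let w ∈ D(t₀), the set of primitive normal vectors of facets of Γ(f/g) containing the smallest face τ₀ through the diagonal point (t₀,…,t₀). Then d(w, Γ(g)) = 0 if and only if (t₀,…,t₀) ∈ F(w, Γ(f)); similarly, d(w, Γ(f)) = 0 if and only if (t₀,…,t₀) ∈ F(w, Γ(g)). -/

import Mathlib

open Finset Pointwise

variable {n : ℕ}

/-- The pairing `⟨k,x⟩ = ∑ i, k i * x i`. -/
noncomputable def dotp (k x : Fin n → ℝ) : ℝ := ∑ i, k i * x i

/-- Convex hull of the union of translated positive orthants `m + ℝ₊ⁿ`. -/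
def orthHull (S : Set (Fin n → ℝ)) : Set (Fin n → ℝ) :=
  convexHull ℝ (⋃ m ∈ S, {x : Fin n → ℝ | ∀ i, m i ≤ x i})

/-- `Γ` is a Newton polyhedron: the convex hull of `⋃_{m ∈ supp} (m + ℝ₊ⁿ)`
for a nonempty finite set of lattice points (the support of a polynomial
vanishing at the origin). -/
def IsNewtonPolyhedron (Γ : Set (Fin n → ℝ)) : Prop :=
  ∃ S : Finset (Fin n → ℕ), S.Nonempty ∧
    Γ = orthHull ((fun m : Fin n → ℕ => fun i => (m i : ℝ)) '' (S : Set (Fin n → ℕ)))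

/-- `d(k,Γ) = min_{x ∈ Γ} ⟨k,x⟩`. -/
noncomputable def dval (k : Fin n → ℝ) (Γ : Set (Fin n → ℝ)) : ℝ :=
  sInf ((fun x => dotp k x) '' Γ)

/-- First meet locus `F(k,Γ) = {x ∈ Γ : ⟨k,x⟩ = d(k,Γ)}`. -/
def fmeet (k : Fin n → ℝ) (Γ : Set (Fin n → ℝ)) : Set (Fin n → ℝ) :=
  {x ∈ Γ | dotp k x = dval k Γ}

/-- `σ(k) = ∑ i, k i`. -/
noncomputable def sigmaS (k : Fin n → ℝ) : ℝ := ∑ i, k i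

/-- The smallest face of `Γ` containing a point `p`: the intersection of all
first meet loci (faces) containing `p`. -/
def minFace (Γ : Set (Fin n → ℝ)) (p : Fin n → ℝ) : Set (Fin n → ℝ) :=
  ⋂₀ {F | p ∈ F ∧ ∃ k : Fin n → ℝ, (∀ i, 0 ≤ k i) ∧ F = fmeet k Γ}

/-- Cast a lattice vector to `ℝⁿ`. -/
def natVec (w : Fin n → ℕ) : Fin n → ℝ := fun i => (w i : ℝ)

/-- `w` is the primitive normal vector of a facet (face of dimension `n-1`) of `Γ`. -/
def IsPrimFacetNormal (Γ : Set (Fin n → ℝ)) (w : Fin n → ℕ) : Prop :=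
  w ≠ 0 ∧ Finset.univ.gcd w = 1 ∧
    Module.finrank ℝ (affineSpan ℝ (fmeet (natVec w) Γ)).direction = n - 1

/-- `D(t₀)`: primitive normal vectors of the facets of `Γ` containing the
smallest face through the diagonal point `p = (t₀,…,t₀)`. -/
def Dset (Γ : Set (Fin n → ℝ)) (p : Fin n → ℝ) : Set (Fin n → ℕ) :=
  {w | IsPrimFacetNormal Γ w ∧ minFace Γ p ⊆ fmeet (natVec w) Γ}

lemma dotp_add (k a b : Fin n → ℝ) : dotp k (a + b) = dotp k a + dotp k b := by
  simp only [dotp, Pi.add_apply, mul_add, Finset.sum_add_distrib]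

lemma dotp_nonneg {k x : Fin n → ℝ} (hk : 0 ≤ k) (hx : 0 ≤ x) : 0 ≤ dotp k x :=
  Finset.sum_nonneg fun i _ => mul_nonneg (hk i) (hx i)

section FirstMeet

variable {k p x : Fin n → ℝ} {Γ A B : Set (Fin n → ℝ)}

lemma bddBelow_image_dotp (hk : 0 ≤ k) (hΓ : Γ ⊆ Set.Ici 0) :
    BddBelow ((fun x => dotp k x) '' Γ) :=
  ⟨0, by rintro _ ⟨x, hx, rfl⟩; exact dotp_nonneg hk (hΓ hx)⟩

lemma dval_le_dotp (hk : 0 ≤ k) (hΓ : Γ ⊆ Set.Ici 0) (hx : x ∈ Γ) :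
    dval k Γ ≤ dotp k x :=
  csInf_le (bddBelow_image_dotp hk hΓ) ⟨x, hx, rfl⟩

lemma dval_add (hA : BddBelow ((fun x => dotp k x) '' A))
    (hB : BddBelow ((fun x => dotp k x) '' B)) (hA' : A.Nonempty) (hB' : B.Nonempty) :
    dval k (A + B) = dval k A + dval k B := by
  have himage : (fun x => dotp k x) '' (A + B) =
      (fun x => dotp k x) '' A + (fun x => dotp k x) '' B :=
    Set.image_add (AddMonoidHom.mk' (dotp k) (dotp_add k))
  rw [dval, himage]
  exact csInf_add (hA'.image _) hA (hB'.image _) hB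

/-- A point of the face `F(k, A + B)` splits as `u + v` with `u ∈ F(k, A)` and `v ∈ F(k, B)`;
when `d(k, B) = 0` the summand `v` is a nonnegative vector, which `A` absorbs. -/
lemma dval_eq_zero_iff_mem_fmeet (hk : 0 ≤ k) (hA : A ⊆ Set.Ici 0) (hB : B ⊆ Set.Ici 0)
    (hA_up : ∀ x ∈ A, ∀ v, 0 ≤ v → x + v ∈ A) (hp : p ∈ fmeet k (A + B)) :
    dval k B = 0 ↔ p ∈ fmeet k A := by
  obtain ⟨hpAB, hp_min⟩ := hp
  obtain ⟨u, hu, v, hv, rfl⟩ := Set.mem_add.mp hpAB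
  have hsum : dval k (A + B) = dval k A + dval k B :=
    dval_add (bddBelow_image_dotp hk hA) (bddBelow_image_dotp hk hB) ⟨u, hu⟩ ⟨v, hv⟩
  have hu_le := dval_le_dotp hk hA hu
  have hv_le := dval_le_dotp hk hB hv
  rw [dotp_add] at hp_min
  constructor
  · intro hB_zero
    have hv_zero : dotp k v = 0 := by linarith
    refine ⟨hA_up u hu v (hB hv), ?_⟩
    rw [dotp_add]
    linarith
  · rintro ⟨-, hp_minA⟩
    rw [dotp_add] at hp_minA
    linarith

end FirstMeet

lemma mem_minFace_self (Γ : Set (Fin n → ℝ)) (p : Fin n → ℝ) : p ∈ minFace Γ p :=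
  Set.mem_sInter.mpr fun _ hF => hF.1

lemma mem_fmeet_of_mem_Dset {Γ : Set (Fin n → ℝ)} {p : Fin n → ℝ} {w : Fin n → ℕ}
    (hw : w ∈ Dset Γ p) : p ∈ fmeet (natVec w) Γ :=
  hw.2 (mem_minFace_self Γ p)

lemma natVec_nonneg (w : Fin n → ℕ) : 0 ≤ natVec w :=
  fun i => Nat.cast_nonneg (w i)

section OrthHull

variable {S : Set (Fin n → ℝ)}

lemma orthHull_subset_Ici {a : Fin n → ℝ} (hS : S ⊆ Set.Ici a) :
    orthHull S ⊆ Set.Ici a := by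
  refine convexHull_min ?_ (convex_Ici a)
  simp only [Set.iUnion_subset_iff]
  exact fun m hm x hx i => (hS hm i).trans (hx i)

lemma add_mem_orthHull {x v : Fin n → ℝ} (hx : x ∈ orthHull S) (hv : 0 ≤ v) :
    x + v ∈ orthHull S := by
  set U := ⋃ m ∈ S, {x : Fin n → ℝ | ∀ i, m i ≤ x i}
  have hU : U ⊆ (· + v) ⁻¹' convexHull ℝ U := by
    simp only [U, Set.iUnion_subset_iff]
    intro m hm y hy
    refine subset_convexHull ℝ U (Set.mem_biUnion hm fun i => ?_)
    exact (hy i).trans (le_add_of_nonneg_right (hv i))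
  exact convexHull_min hU ((convex_convexHull ℝ U).translate_preimage_left v) hx

end OrthHull

namespace IsNewtonPolyhedron

variable {Γ : Set (Fin n → ℝ)}

lemma subset_Ici_zero (hΓ : IsNewtonPolyhedron Γ) : Γ ⊆ Set.Ici 0 := by
  obtain ⟨S, -, rfl⟩ := hΓ
  refine orthHull_subset_Ici ?_
  rintro _ ⟨m, -, rfl⟩ i
  exact Nat.cast_nonneg (m i)

lemma add_mem (hΓ : IsNewtonPolyhedron Γ) {x : Fin n → ℝ} (hx : x ∈ Γ) {v : Fin n → ℝ}
    (hv : 0 ≤ v) : x + v ∈ Γ := by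
  obtain ⟨S, -, rfl⟩ := hΓ
  exact add_mem_orthHull hx hv

end IsNewtonPolyhedron

theorem dval_zero_iff_diagonal_in_first_meet_general
    (Γf Γg : Set (Fin n → ℝ))
    (hΓf : IsNewtonPolyhedron Γf) (hΓg : IsNewtonPolyhedron Γg)
    (t₀ : ℝ)
    (w : Fin n → ℕ) (hw : w ∈ Dset (Γf + Γg) (fun _ => t₀)) :
    (dval (natVec w) Γg = 0 ↔ (fun _ : Fin n => t₀) ∈ fmeet (natVec w) Γf) ∧
    (dval (natVec w) Γf = 0 ↔ (fun _ : Fin n => t₀) ∈ fmeet (natVec w) Γg) := by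
  have hp := mem_fmeet_of_mem_Dset hw
  have hp' : (fun _ : Fin n => t₀) ∈ fmeet (natVec w) (Γg + Γf) := add_comm Γf Γg ▸ hp
  exact ⟨dval_eq_zero_iff_mem_fmeet (natVec_nonneg w) hΓf.subset_Ici_zero hΓg.subset_Ici_zero
      (fun _ hx _ hv => hΓf.add_mem hx hv) hp,
    dval_eq_zero_iff_mem_fmeet (natVec_nonneg w) hΓg.subset_Ici_zero hΓf.subset_Ici_zero
      (fun _ hx _ hv => hΓg.add_mem hx hv) hp'⟩

/-- for `w ∈ D(t₀)` (primitive normals of facets of `Γ(f/g)`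
containing the smallest face through the diagonal point), `d(w,Γ(g)) = 0` iff
`(t₀,…,t₀) ∈ F(w,Γ(f))`, and `d(w,Γ(f)) = 0` iff `(t₀,…,t₀) ∈ F(w,Γ(g))`. -/
theorem dval_zero_iff_diagonal_in_first_meet
    (hn : 2 ≤ n)
    (Γf Γg : Set (Fin n → ℝ))
    (hΓf : IsNewtonPolyhedron Γf) (hΓg : IsNewtonPolyhedron Γg)
    (t₀ : ℝ) (ht₀ : 0 < t₀)
    (hdiag : (fun _ : Fin n => t₀) ∈ frontier (Γf + Γg))
    (w : Fin n → ℕ) (hw : w ∈ Dset (Γf + Γg) (fun _ => t₀)) :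
    (dval (natVec w) Γg = 0 ↔ (fun _ : Fin n => t₀) ∈ fmeet (natVec w) Γf) ∧
    (dval (natVec w) Γf = 0 ↔ (fun _ : Fin n => t₀) ∈ fmeet (natVec w) Γg) :=
  dval_zero_iff_diagonal_in_first_meet_general Γf Γg hΓf hΓg t₀ w hw
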